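/- arXiv:2304.06686 — 2 statements merged into one kernel-verified Lean document; each statement's English description precedes it below -/
import Mathlib

section
/- Let X be a real n×p matrix, y ∈ ℝⁿ, λ₂ > 0, λ a real with 0 ≤ λ ≤ λ_min(XᵀX), Q_λ = XᵀX − λI, and k an integer with 1 ≤ k ≤ p. Then the optimal values of the two max–min problems coincide: sup_{c ∈ ℝᵖ} inf_{β ∈ ℝᵖ, z ∈ D_z} L_Fenchel(β, z, c) = sup_{γ ∈ ℝᵖ} inf_{z ∈ D_z} L_saddle(γ, z). -/
open Matrix

noncomputable section

theorem XtX_isHermitian {n p : ℕ} (X : Matrix (Fin n) (Fin p) ℝ) :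
    (Xᵀ * X).IsHermitian := by
  simpa using Matrix.isHermitian_conjTranspose_mul_self X

/-- The smallest eigenvalue `λ_min(XᵀX)`. -/
def lamMin {n p : ℕ} (X : Matrix (Fin n) (Fin p) ℝ) : ℝ :=
  ⨅ i, (XtX_isHermitian X).eigenvalues i

/-- `Q_λ = XᵀX − λ I`. -/
def Qmat {n p : ℕ} (X : Matrix (Fin n) (Fin p) ℝ) (lam : ℝ) : Matrix (Fin p) (Fin p) ℝ :=
  Xᵀ * X - lam • (1 : Matrix (Fin p) (Fin p) ℝ)

/-- The feasible region `D_z = {z : 0 ≤ z_j ≤ 1, Σ_j z_j ≤ k}`. -/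
def Dz (p k : ℕ) : Set (Fin p → ℝ) :=
  {z | (∀ j, 0 ≤ z j ∧ z j ≤ 1) ∧ ∑ j, z j ≤ (k : ℝ)}

/-- `L_Fenchel(β, z, c) = βᵀQ_λβ − 2yᵀXβ + (λ₂+λ) Σ_j (β_j c_j − (c_j²/4) z_j)`. -/
def LFenchel {n p : ℕ} (X : Matrix (Fin n) (Fin p) ℝ) (y : Fin n → ℝ) (lam2 lam : ℝ)
    (β z c : Fin p → ℝ) : ℝ :=
  β ⬝ᵥ (Qmat X lam).mulVec β - 2 * (y ⬝ᵥ X.mulVec β)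
    + (lam2 + lam) * ∑ j, (β j * c j - (c j) ^ 2 / 4 * z j)

/-- `L_saddle(γ, z) = −γᵀQ_λγ − (1/(λ₂+λ)) (Xᵀy − Q_λγ)ᵀ diag(z) (Xᵀy − Q_λγ)`. -/
def LSaddle {n p : ℕ} (X : Matrix (Fin n) (Fin p) ℝ) (y : Fin n → ℝ) (lam2 lam : ℝ)
    (γ z : Fin p → ℝ) : ℝ :=
  -(γ ⬝ᵥ (Qmat X lam).mulVec γ)
    - (1 / (lam2 + lam)) *
      ((Xᵀ.mulVec y - (Qmat X lam).mulVec γ) ⬝ᵥ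
        (diagonal z).mulVec (Xᵀ.mulVec y - (Qmat X lam).mulVec γ))

lemma Qmat_posSemidef {n p : ℕ} [NeZero p] (X : Matrix (Fin n) (Fin p) ℝ) {lam : ℝ}
    (hlam : lam ≤ lamMin X) : (Qmat X lam).PosSemidef := by
  have hA := XtX_isHermitian X
  have hspec := hA.spectral_theorem
  have hU : (hA.eigenvectorUnitary : Matrix (Fin p) (Fin p) ℝ) *
      (star (hA.eigenvectorUnitary : Matrix (Fin p) (Fin p) ℝ)) = 1 :=
    (Matrix.mem_unitaryGroup_iff).mp hA.eigenvectorUnitary.2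
  have key : Qmat X lam = (hA.eigenvectorUnitary : Matrix (Fin p) (Fin p) ℝ) *
      diagonal (fun i => hA.eigenvalues i - lam) *
      (star (hA.eigenvectorUnitary : Matrix (Fin p) (Fin p) ℝ)) := by
    have h1 : lam • (1 : Matrix (Fin p) (Fin p) ℝ) =
        (hA.eigenvectorUnitary : Matrix (Fin p) (Fin p) ℝ) * diagonal (fun _ => lam) *
        (star (hA.eigenvectorUnitary : Matrix (Fin p) (Fin p) ℝ)) := by
      rw [← smul_one_eq_diagonal]
      rw [Matrix.mul_smul, Matrix.mul_one, Matrix.smul_mul, hU]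
    rw [Qmat]
    conv_lhs => rw [hspec, h1]
    rw [Unitary.conjStarAlgAut_apply, ← Matrix.sub_mul, ← Matrix.mul_sub, diagonal_sub]
    congr 1
  rw [key]
  refine Matrix.PosSemidef.mul_mul_conjTranspose_same ?_ _
  refine posSemidef_diagonal_iff.mpr fun i => ?_
  have : lamMin X ≤ hA.eigenvalues i := ciInf_le (Finite.bddBelow_range _) i
  linarith

lemma Qmat_sym {n p : ℕ} (X : Matrix (Fin n) (Fin p) ℝ) (lam : ℝ) :
    (Qmat X lam)ᵀ = Qmat X lam := by
  simp [Qmat, transpose_sub, transpose_smul, transpose_mul, transpose_one]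

lemma dot_symm {p : ℕ} {Q : Matrix (Fin p) (Fin p) ℝ} (hQ : Qᵀ = Q) (a b : Fin p → ℝ) :
    a ⬝ᵥ Q *ᵥ b = b ⬝ᵥ Q *ᵥ a := by
  rw [dotProduct_mulVec, ← mulVec_transpose, hQ, dotProduct_comm]

lemma q_nonneg {p : ℕ} {Q : Matrix (Fin p) (Fin p) ℝ} (hQ : Q.PosSemidef) (x : Fin p → ℝ) :
    0 ≤ x ⬝ᵥ Q *ᵥ x := by
  simpa using hQ.dotProduct_mulVec_nonneg x

lemma range_of_perp {p : ℕ} {Q : Matrix (Fin p) (Fin p) ℝ} (hQ : Q.PosSemidef)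
    (w : Fin p → ℝ) (h : ∀ u, Q *ᵥ u = 0 → w ⬝ᵥ u = 0) : ∃ γ, Q *ᵥ γ = w := by
  classical
  set T := Matrix.toEuclideanLin Q with hT
  set K := LinearMap.range T with hK
  have hw : (WithLp.equiv 2 (Fin p → ℝ)).symm w ∈ K := by
    rw [← Submodule.orthogonal_orthogonal K]
    intro u hu
    have h1 : (inner ℝ u (T u) : ℝ) = 0 := by
      have := hu (T u) (LinearMap.mem_range_self T u)
      rwa [real_inner_comm] at this
    have key : (inner ℝ u (T u) : ℝ) =
        (WithLp.equiv 2 (Fin p → ℝ) u) ⬝ᵥ Q *ᵥ (WithLp.equiv 2 (Fin p → ℝ) u) := by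
      simp only [PiLp.inner_apply, RCLike.inner_apply, conj_trivial, dotProduct]
      exact Finset.sum_congr rfl fun i _ => mul_comm _ _
    have h2 : Q *ᵥ (WithLp.equiv 2 (Fin p → ℝ) u) = 0 := by
      rw [← hQ.dotProduct_mulVec_zero_iff]
      simp only [star_trivial]
      rw [← key, h1]
    have h3 := h _ h2
    show (inner ℝ u ((WithLp.equiv 2 (Fin p → ℝ)).symm w) : ℝ) = 0
    rw [← h3, dotProduct_comm]
    simp only [PiLp.inner_apply, RCLike.inner_apply, conj_trivial, dotProduct]
    exact Finset.sum_congr rfl fun i _ => mul_comm _ _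
  obtain ⟨γ, hγ⟩ := hw
  refine ⟨WithLp.equiv 2 (Fin p → ℝ) γ, ?_⟩
  have := congrArg (WithLp.equiv 2 (Fin p → ℝ)) hγ
  simpa [hT, Matrix.toEuclideanLin_apply] using this

lemma yX_dot {n p : ℕ} (X : Matrix (Fin n) (Fin p) ℝ) (y : Fin n → ℝ) (b : Fin p → ℝ) :
    y ⬝ᵥ X.mulVec b = (Xᵀ.mulVec y) ⬝ᵥ b := by
  rw [mulVec_transpose, ← dotProduct_mulVec]

/-- Main algebraic identity. -/
lemma LF_eq {n p : ℕ} (X : Matrix (Fin n) (Fin p) ℝ) (y : Fin n → ℝ) {lam2 lam : ℝ}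
    (hs : lam2 + lam ≠ 0) (γ β z : Fin p → ℝ) :
    LFenchel X y lam2 lam β z
        ((2 / (lam2 + lam)) • (Xᵀ.mulVec y - (Qmat X lam).mulVec γ)) =
      LSaddle X y lam2 lam γ z + (β - γ) ⬝ᵥ (Qmat X lam) *ᵥ (β - γ) := by
  set Q := Qmat X lam with hQdef
  set v : Fin p → ℝ := Xᵀ.mulVec y - Q.mulVec γ with hv
  set s : ℝ := lam2 + lam with hsdef
  have hsum : s * ∑ j, (β j * ((2 / s) • v) j - (((2 / s) • v) j) ^ 2 / 4 * z j)
      = 2 * (β ⬝ᵥ v) - (1 / s) * (v ⬝ᵥ (diagonal z).mulVec v) := by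
    have hdv : v ⬝ᵥ (diagonal z).mulVec v = ∑ j, v j * (z j * v j) := by
      simp [dotProduct, mulVec_diagonal]
    rw [hdv, Finset.mul_sum, dotProduct, Finset.mul_sum, Finset.mul_sum, ← Finset.sum_sub_distrib]
    refine Finset.sum_congr rfl fun j _ => ?_
    simp only [Pi.smul_apply, smul_eq_mul]
    field_simp
    ring
  have hvdot : β ⬝ᵥ v = β ⬝ᵥ Xᵀ.mulVec y - β ⬝ᵥ Q.mulVec γ := by
    rw [hv, dotProduct_sub]
  have hsym : γ ⬝ᵥ Q *ᵥ β = β ⬝ᵥ Q *ᵥ γ := dot_symm (Qmat_sym X lam) γ β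
  have hexp : (β - γ) ⬝ᵥ Q *ᵥ (β - γ)
      = β ⬝ᵥ Q *ᵥ β - 2 * (β ⬝ᵥ Q *ᵥ γ) + γ ⬝ᵥ Q *ᵥ γ := by
    rw [mulVec_sub, sub_dotProduct, dotProduct_sub, dotProduct_sub, hsym]
    ring
  rw [LFenchel, LSaddle, hsum, yX_dot X y β, hvdot, hexp]
  have h4 : (Xᵀ.mulVec y) ⬝ᵥ β = β ⬝ᵥ Xᵀ.mulVec y := dotProduct_comm _ _
  rw [h4]
  simp only [← hQdef, ← hsdef, ← hv]
  ring

/-- The optimal values of the two max–min problems coincide. -/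
theorem stmt0 {n p : ℕ} (X : Matrix (Fin n) (Fin p) ℝ) (y : Fin n → ℝ)
    (lam2 : ℝ) (hlam2 : 0 < lam2)
    (lam : ℝ) (hlam0 : 0 ≤ lam) (hlam : lam ≤ lamMin X)
    (k : ℕ) (hk1 : 1 ≤ k) (hkp : k ≤ p) :
    (⨆ c : Fin p → ℝ, ⨅ β : Fin p → ℝ, ⨅ z ∈ Dz p k,
        ((LFenchel X y lam2 lam β z c : ℝ) : EReal)) =
      ⨆ γ : Fin p → ℝ, ⨅ z ∈ Dz p k, ((LSaddle X y lam2 lam γ z : ℝ) : EReal) := by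
  haveI : NeZero p := ⟨by omega⟩
  have hs0 : (0 : ℝ) < lam2 + lam := by linarith
  have hs : lam2 + lam ≠ 0 := ne_of_gt hs0
  have hQpsd : (Qmat X lam).PosSemidef := Qmat_posSemidef X hlam
  have hz0 : (0 : Fin p → ℝ) ∈ Dz p k := by
    constructor
    · intro j; simp
    · simp
  set c : (Fin p → ℝ) → (Fin p → ℝ) :=
    fun γ => (2 / (lam2 + lam)) • (Xᵀ.mulVec y - (Qmat X lam).mulVec γ) with hc
  have key : ∀ γ : Fin p → ℝ,
      (⨅ β : Fin p → ℝ, ⨅ z ∈ Dz p k, ((LFenchel X y lam2 lam β z (c γ) : ℝ) : EReal))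
        = ⨅ z ∈ Dz p k, ((LSaddle X y lam2 lam γ z : ℝ) : EReal) := by
    intro γ
    apply le_antisymm
    · refine iInf_le_of_le γ (le_of_eq ?_)
      refine iInf_congr fun z => iInf_congr fun hz => ?_
      norm_cast
      rw [LF_eq X y hs γ γ z]
      simp
    · refine le_iInf fun β => ?_
      refine iInf_mono fun z => iInf_mono fun hz => ?_
      rw [EReal.coe_le_coe_iff, LF_eq X y hs γ β z]
      have := q_nonneg hQpsd (β - γ)
      linarith
  apply le_antisymm
  · refine iSup_le fun cc => ?_
    by_cases hex : ∃ γ, (Qmat X lam) *ᵥ γ = Xᵀ.mulVec y - ((lam2 + lam) / 2) • cc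
    · obtain ⟨γ, hγ⟩ := hex
      have hcc : c γ = cc := by
        rw [hc]
        simp only
        rw [hγ, sub_sub_cancel, smul_smul]
        rw [show 2 / (lam2 + lam) * ((lam2 + lam) / 2) = 1 by field_simp]
        simp
      calc (⨅ β : Fin p → ℝ, ⨅ z ∈ Dz p k, ((LFenchel X y lam2 lam β z cc : ℝ) : EReal))
          = ⨅ z ∈ Dz p k, ((LSaddle X y lam2 lam γ z : ℝ) : EReal) := by rw [← hcc, key γ]
        _ ≤ _ := le_iSup (fun γ => ⨅ z ∈ Dz p k, ((LSaddle X y lam2 lam γ z : ℝ) : EReal)) γ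
    · have hbot : (⨅ β : Fin p → ℝ, ⨅ z ∈ Dz p k,
          ((LFenchel X y lam2 lam β z cc : ℝ) : EReal)) = ⊥ := by
        rw [iInf_eq_bot]
        intro b hb
        obtain ⟨r, _, hr2⟩ := EReal.exists_between_coe_real hb
        have hu : ∃ u, (Qmat X lam) *ᵥ u = 0 ∧
            (Xᵀ.mulVec y - ((lam2 + lam) / 2) • cc) ⬝ᵥ u ≠ 0 := by
          by_contra hcon
          push_neg at hcon
          exact hex (range_of_perp hQpsd _ fun u h0 => hcon u h0)
        obtain ⟨u, hu0, hune⟩ := hu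
        set a : ℝ := (Xᵀ.mulVec y - ((lam2 + lam) / 2) • cc) ⬝ᵥ u with hadef
        set t : ℝ := (1 - r) / (2 * a) with ht
        refine ⟨t • u, ?_⟩
        have hval : LFenchel X y lam2 lam (t • u) 0 cc = r - 1 := by
          have h1 : (t • u) ⬝ᵥ (Qmat X lam) *ᵥ (t • u) = 0 := by
            rw [mulVec_smul, hu0]
            simp
          have h2 : y ⬝ᵥ X.mulVec (t • u) = t * ((Xᵀ.mulVec y) ⬝ᵥ u) := by
            rw [yX_dot, dotProduct_smul]
            simp
          have h3 : ∑ j, ((t • u) j * cc j - (cc j) ^ 2 / 4 * (0 : Fin p → ℝ) j)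
              = t * (u ⬝ᵥ cc) := by
            rw [dotProduct, Finset.mul_sum]
            refine Finset.sum_congr rfl fun j _ => ?_
            simp only [Pi.smul_apply, smul_eq_mul, Pi.zero_apply, mul_zero, sub_zero]
            ring
          have ha' : a = (Xᵀ.mulVec y) ⬝ᵥ u - (lam2 + lam) / 2 * (u ⬝ᵥ cc) := by
            rw [hadef, sub_dotProduct, smul_dotProduct]
            rw [dotProduct_comm cc u]
            simp
          have ha : a ≠ 0 := hune
          have hgoal : -2 * t * a = r - 1 := by
            rw [ht]
            field_simp
            ring
          rw [LFenchel, h1, h2, h3]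
          linear_combination (2 * t) * ha' + hgoal
        calc (⨅ z ∈ Dz p k, ((LFenchel X y lam2 lam (t • u) z cc : ℝ) : EReal))
            ≤ ((LFenchel X y lam2 lam (t • u) 0 cc : ℝ) : EReal) := iInf₂_le 0 hz0
          _ = ((r - 1 : ℝ) : EReal) := by rw [hval]
          _ < (r : ℝ) := by exact_mod_cast (by linarith : (r - 1 : ℝ) < r)
          _ < b := hr2
      rw [hbot]
      exact bot_le
  · refine iSup_le fun γ => ?_
    rw [← key γ]
    exact le_iSup (fun cc => ⨅ β : Fin p → ℝ, ⨅ z ∈ Dz p k,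
      ((LFenchel X y lam2 lam β z cc : ℝ) : EReal)) (c γ)
end
end

section
/- Let X be a real n×p matrix, y ∈ ℝⁿ, λ₂ > 0, λ a real with 0 ≤ λ ≤ λ_min(XᵀX), and Q_λ = XᵀX − λI. Fix γ ∈ ℝᵖ and set c = (2/(λ₂ + λ)) (Xᵀy − Q_λγ). Then for every z ∈ ℝᵖ, β = γ minimizes β ↦ L_Fenchel(β, z, c) over ℝᵖ; that is, L_Fenchel(β, z, c) ≥ L_Fenchel(γ, z, c) for all β ∈ ℝᵖ. -/
open Matrix

noncomputable section

lemma Q_nonneg_aux {n p : ℕ} (X : Matrix (Fin n) (Fin p) ℝ) (lam : ℝ)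
    (hlam : lam ≤ lamMin X) (v : Fin p → ℝ) :
    0 ≤ v ⬝ᵥ (Qmat X lam).mulVec v := by
  set hA := XtX_isHermitian X with hhA
  set U : Matrix (Fin p) (Fin p) ℝ := (hA.eigenvectorUnitary : Matrix (Fin p) (Fin p) ℝ) with hU
  have hUU : U * Uᵀ = 1 := by
    have := (Matrix.mem_unitaryGroup_iff).mp hA.eigenvectorUnitary.2
    simpa [hU, Matrix.star_eq_conjTranspose,
      Matrix.conjTranspose_eq_transpose_of_trivial] using this
  set w : Fin p → ℝ := Uᵀ.mulVec v with hw
  have hspec := hA.spectral_theorem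
  have hAv : v ⬝ᵥ (Xᵀ * X).mulVec v = ∑ i, hA.eigenvalues i * (w i)^2 := by
    conv_lhs => rw [hspec]
    simp only [Unitary.conjStarAlgAut_apply, Matrix.star_eq_conjTranspose, Matrix.conjTranspose_eq_transpose_of_trivial]
    rw [← Matrix.mulVec_mulVec, ← Matrix.mulVec_mulVec, Matrix.dotProduct_mulVec,
      ← Matrix.mulVec_transpose]
    simp only [← hU, ← hw, dotProduct, Matrix.mulVec_diagonal, Function.comp_apply,
      RCLike.ofReal_real_eq_id, id_eq]
    exact Finset.sum_congr rfl fun i _ => by ring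
  have hvv : v ⬝ᵥ v = ∑ i, (w i)^2 := by
    have : v ⬝ᵥ v = v ⬝ᵥ (U * Uᵀ).mulVec v := by rw [hUU]; simp
    rw [this, ← Matrix.mulVec_mulVec, Matrix.dotProduct_mulVec, ← Matrix.mulVec_transpose]
    simp only [← hw, dotProduct]
    exact Finset.sum_congr rfl fun i _ => by ring
  have hQ : v ⬝ᵥ (Qmat X lam).mulVec v = ∑ i, (hA.eigenvalues i - lam) * (w i)^2 := by
    simp only [Qmat, Matrix.sub_mulVec, dotProduct_sub, hAv, Matrix.smul_mulVec,
      Matrix.one_mulVec, dotProduct_smul, smul_eq_mul, hvv, Finset.mul_sum,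
      ← Finset.sum_sub_distrib]
    exact Finset.sum_congr rfl fun i _ => by ring
  rw [hQ]
  apply Finset.sum_nonneg
  intro i _
  have hle : lam ≤ hA.eigenvalues i :=
    le_trans hlam (ciInf_le (Set.Finite.bddBelow (Set.finite_range _)) i)
  have := sq_nonneg (w i)
  nlinarith

/-- With `c = (2/(λ₂+λ))(Xᵀy − Q_λγ)`, for every `z` the vector `β = γ` minimizes
`β ↦ L_Fenchel(β, z, c)` over `ℝᵖ`. -/
theorem stmt19 {n p : ℕ} (X : Matrix (Fin n) (Fin p) ℝ) (y : Fin n → ℝ)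
    (lam2 : ℝ) (hlam2 : 0 < lam2)
    (lam : ℝ) (hlam0 : 0 ≤ lam) (hlam : lam ≤ lamMin X)
    (γ : Fin p → ℝ) (c : Fin p → ℝ)
    (hc : c = (2 / (lam2 + lam)) • (Xᵀ.mulVec y - (Qmat X lam).mulVec γ)) :
    ∀ z β : Fin p → ℝ, LFenchel X y lam2 lam γ z c ≤ LFenchel X y lam2 lam β z c := by
  intro z β
  have hpsd : ∀ v : Fin p → ℝ, 0 ≤ v ⬝ᵥ (Qmat X lam).mulVec v :=
    fun v => Q_nonneg_aux X lam hlam v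
  have hll : lam2 + lam ≠ 0 := by positivity
  set Q := Qmat X lam with hQdef
  have hQsym : Qᵀ = Q := by
    simp [hQdef, Qmat, Matrix.transpose_sub, Matrix.transpose_smul, Matrix.transpose_mul]
  have key : ∀ β' : Fin p → ℝ, LFenchel X y lam2 lam β' z c =
      β' ⬝ᵥ Q.mulVec β' - 2 * (β' ⬝ᵥ Q.mulVec γ)
        - (lam2 + lam) * ∑ j, (c j)^2 / 4 * z j := by
    intro β'
    have h1 : y ⬝ᵥ X.mulVec β' = β' ⬝ᵥ Xᵀ.mulVec y := by
      rw [Matrix.dotProduct_mulVec, ← Matrix.mulVec_transpose, dotProduct_comm]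
    have h2 : ∑ j, β' j * c j = β' ⬝ᵥ c := rfl
    have h3 : (lam2 + lam) * (β' ⬝ᵥ c) =
        2 * (β' ⬝ᵥ Xᵀ.mulVec y) - 2 * (β' ⬝ᵥ Q.mulVec γ) := by
      rw [hc]
      rw [dotProduct_smul, smul_eq_mul, dotProduct_sub]
      field_simp
    simp only [LFenchel, Finset.sum_sub_distrib, mul_sub, h2, h3, h1, ← hQdef]
    ring
  rw [key β, key γ]
  have hdiff : (β - γ) ⬝ᵥ Q.mulVec (β - γ) =
      β ⬝ᵥ Q.mulVec β - 2 * (β ⬝ᵥ Q.mulVec γ) + γ ⬝ᵥ Q.mulVec γ := by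
    have hsymdot : γ ⬝ᵥ Q.mulVec β = β ⬝ᵥ Q.mulVec γ := by
      rw [Matrix.dotProduct_mulVec, ← Matrix.mulVec_transpose, hQsym, dotProduct_comm]
    simp only [Matrix.sub_mulVec, Matrix.mulVec_sub, dotProduct_sub,
      sub_dotProduct, hsymdot]
    ring
  have := hpsd (β - γ)
  rw [hdiff] at this
  linarith
end
end
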